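/- arXiv:nlin/0111013 — 4 statements merged into one kernel-verified Lean document; each statement's English description precedes it below -/
import Mathlib

section
/- Let z: ℝ² → ℝ be smooth with z_x nowhere zero, and let L(z_x, z_t, z_xx) = (1/2)(z_x z_t + z_xx²/z_x³ + z_x³). Then the Euler–Lagrange equation ∂_x(∂L/∂z_x) + ∂_t(∂L/∂z_t) − ∂_x²(∂L/∂z_xx) = 0 (with derivatives taken along z) is equivalent to z_xt = ∂_x[ z_xxx/z_x³ − (3/2) z_xx²/z_x⁴ − (3/2) z_x² ]; i.e., w = z_x satisfies w_t = ∂_x[w_xx/w³ − (3/2)w_x²/w⁴ − (3/2)w²]. -/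
noncomputable def pdx (G : ℝ × ℝ → ℝ) : ℝ × ℝ → ℝ := fun p => fderiv ℝ G p (1, 0)
noncomputable def pdt (G : ℝ × ℝ → ℝ) : ℝ × ℝ → ℝ := fun p => fderiv ℝ G p (0, 1)

lemma contDiff_apply_fderiv {G : ℝ × ℝ → ℝ} (hG : ContDiff ℝ (⊤ : ℕ∞) G) (v : ℝ × ℝ) :
    ContDiff ℝ (⊤ : ℕ∞) (fun p => fderiv ℝ G p v) :=
  (ContinuousLinearMap.apply ℝ ℝ v).contDiff.comp (hG.fderiv_right (by simp))

lemma contDiff_pdx {G : ℝ × ℝ → ℝ} (hG : ContDiff ℝ (⊤ : ℕ∞) G) : ContDiff ℝ (⊤ : ℕ∞) (pdx G) :=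
  contDiff_apply_fderiv hG _

lemma contDiff_pdt {G : ℝ × ℝ → ℝ} (hG : ContDiff ℝ (⊤ : ℕ∞) G) : ContDiff ℝ (⊤ : ℕ∞) (pdt G) :=
  contDiff_apply_fderiv hG _

lemma hasDerivAt_slice1 {G : ℝ × ℝ → ℝ} (hG : ContDiff ℝ (⊤ : ℕ∞) G) (x t : ℝ) :
    HasDerivAt (fun y => G (y, t)) (pdx G (x, t)) x := by
  have h1 : HasDerivAt (fun y : ℝ => ((y, t) : ℝ × ℝ)) (1, 0) x :=
    HasDerivAt.prodMk (hasDerivAt_id x) (hasDerivAt_const x t)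
  exact HasFDerivAt.comp_hasDerivAt (f := fun y : ℝ => ((y, t) : ℝ × ℝ)) x
    (hG.differentiable (by simp) (x, t)).hasFDerivAt h1

lemma hasDerivAt_slice2 {G : ℝ × ℝ → ℝ} (hG : ContDiff ℝ (⊤ : ℕ∞) G) (x t : ℝ) :
    HasDerivAt (fun s => G (x, s)) (pdt G (x, t)) t := by
  have h1 : HasDerivAt (fun s : ℝ => ((x, s) : ℝ × ℝ)) (0, 1) t :=
    HasDerivAt.prodMk (hasDerivAt_const t x) (hasDerivAt_id t)
  exact HasFDerivAt.comp_hasDerivAt (f := fun s : ℝ => ((x, s) : ℝ × ℝ)) t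
    (hG.differentiable (by simp) (x, t)).hasFDerivAt h1

lemma pdx_pdt_comm {G : ℝ × ℝ → ℝ} (hG : ContDiff ℝ (⊤ : ℕ∞) G) (p : ℝ × ℝ) :
    pdx (pdt G) p = pdt (pdx G) p := by
  have hd : DifferentiableAt ℝ (fderiv ℝ G) p :=
    ((hG.fderiv_right (m := (⊤ : ℕ∞)) (by simp)).differentiable (by simp)) p
  have e : ∀ v w : ℝ × ℝ,
      fderiv ℝ (fun q => fderiv ℝ G q v) p w = fderiv ℝ (fderiv ℝ G) p w v := by
    intro v w
    have h : fderiv ℝ (fun q => fderiv ℝ G q v) p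
        = (ContinuousLinearMap.apply ℝ ℝ v).comp (fderiv ℝ (fderiv ℝ G) p) :=
      ((ContinuousLinearMap.apply ℝ ℝ v).hasFDerivAt.comp p hd.hasFDerivAt).fderiv
    rw [h]; rfl
  have hsym : IsSymmSndFDerivAt ℝ G p := hG.contDiffAt.isSymmSndFDerivAt (by rw [minSmoothness_of_isRCLikeNormedField]; exact WithTop.coe_le_coe.mpr (le_top : (2 : ℕ∞) ≤ ⊤))
  show fderiv ℝ (pdt G) p (1, 0) = fderiv ℝ (pdx G) p (0, 1)
  have e1 : fderiv ℝ (pdt G) p (1, 0) = fderiv ℝ (fderiv ℝ G) p (1, 0) (0, 1) := e _ _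
  have e2 : fderiv ℝ (pdx G) p (0, 1) = fderiv ℝ (fderiv ℝ G) p (0, 1) (1, 0) := e _ _
  rw [e1, e2]; exact hsym _ _

lemma Lderiv1 (q r p : ℝ) (hp : p ≠ 0) :
    deriv (fun p : ℝ => (1/2) * (p * q + r^2 / p^3 + p^3)) p
      = (1/2) * (q - 3*r^2/p^4 + 3*p^2) := by
  have hp3 : HasDerivAt (fun p : ℝ => p^3) ((3 : ℕ) * p^(3-1)) p := hasDerivAt_pow 3 p
  have H : HasDerivAt (fun p : ℝ => (1/2) * (p * q + r^2 / p^3 + p^3)) _ p :=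
    (((hasDerivAt_mul_const q).add
      ((hasDerivAt_const p (r^2)).div hp3 (pow_ne_zero 3 hp))).add hp3).const_mul (1/2)
  rw [H.deriv]
  push_cast
  field_simp
  ring

lemma Lderiv2 (p r q : ℝ) :
    deriv (fun q : ℝ => (1/2) * (p * q + r^2 / p^3 + p^3)) q = (1/2) * p := by
  have H : HasDerivAt (fun q : ℝ => (1/2) * (p * q + r^2 / p^3 + p^3)) _ q :=
    ((((hasDerivAt_id q).const_mul p).add_const (r^2/p^3)).add_const (p^3)).const_mul (1/2)
  rw [H.deriv]; ring

lemma Lderiv3 (p q r : ℝ) :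
    deriv (fun r : ℝ => (1/2) * (p * q + r^2 / p^3 + p^3)) r = r / p^3 := by
  have h2 : HasDerivAt (fun r : ℝ => r^2) ((2 : ℕ) * r^(2-1)) r := hasDerivAt_pow 2 r
  have H : HasDerivAt (fun r : ℝ => (1/2) * (p * q + r^2 / p^3 + p^3)) _ r :=
    (((h2.div_const (p^3)).const_add (p*q)).add_const (p^3)).const_mul (1/2)
  rw [H.deriv]; push_cast; ring

/-- The Lagrangian representation (4.7): the Euler–Lagrange equation of
`L = (1/2)(z_x z_t + z_xx²/z_x³ + z_x³)` is equivalent to equation (4.5) for `w = z_x`. -/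
theorem stmt_8 (z : ℝ → ℝ → ℝ)
    (hz : ContDiff ℝ (⊤ : ℕ∞) (Function.uncurry z))
    (hzx : ∀ x t, deriv (fun y => z y t) x ≠ 0) :
    let L : ℝ → ℝ → ℝ → ℝ := fun p q r => (1/2) * (p * q + r^2 / p^3 + p^3)
    let zx : ℝ → ℝ → ℝ := fun x t => deriv (fun y => z y t) x
    let zt : ℝ → ℝ → ℝ := fun x t => deriv (fun s => z x s) t
    let zxx : ℝ → ℝ → ℝ := fun x t => deriv (fun y => zx y t) x
    let P1 : ℝ → ℝ → ℝ := fun x t => deriv (fun p => L p (zt x t) (zxx x t)) (zx x t)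
    let P2 : ℝ → ℝ → ℝ := fun x t => deriv (fun q => L (zx x t) q (zxx x t)) (zt x t)
    let P3 : ℝ → ℝ → ℝ := fun x t => deriv (fun r => L (zx x t) (zt x t) r) (zxx x t)
    (∀ x t, deriv (fun y => P1 y t) x + deriv (fun s => P2 x s) t
        - deriv (fun y => deriv (fun y' => P3 y' t) y) x = 0)
      ↔ (∀ x t, deriv (fun s => zx x s) t =
          deriv (fun y => deriv (fun y' => zxx y' t) y / (zx y t)^3
            - (3/2) * (zxx y t)^2 / (zx y t)^4 - (3/2) * (zx y t)^2) x) := by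
  intro L zx zt zxx P1 P2 P3
  set F : ℝ × ℝ → ℝ := Function.uncurry z with hFdef
  have hF : ContDiff ℝ (⊤ : ℕ∞) F := hz
  have h1 : ContDiff ℝ (⊤ : ℕ∞) (pdx F) := contDiff_pdx hF
  have h2 : ContDiff ℝ (⊤ : ℕ∞) (pdx (pdx F)) := contDiff_pdx h1
  have h3 : ContDiff ℝ (⊤ : ℕ∞) (pdx (pdx (pdx F))) := contDiff_pdx h2
  have hT : ContDiff ℝ (⊤ : ℕ∞) (pdt F) := contDiff_pdt hF
  have ezx : ∀ x t, zx x t = pdx F (x, t) := fun x t => (hasDerivAt_slice1 hF x t).deriv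
  have ezt : ∀ x t, zt x t = pdt F (x, t) := fun x t => (hasDerivAt_slice2 hF x t).deriv
  have ezxx : ∀ x t, zxx x t = pdx (pdx F) (x, t) := by
    intro x t
    have e : (fun y => zx y t) = fun y => pdx F (y, t) := funext fun y => ezx y t
    show deriv (fun y => zx y t) x = _
    rw [e]; exact (hasDerivAt_slice1 h1 x t).deriv
  have hne : ∀ x t : ℝ, pdx F (x, t) ≠ 0 := by
    intro x t
    have h := hzx x t
    have e : deriv (fun y => z y t) x = pdx F (x, t) := (hasDerivAt_slice1 hF x t).deriv
    rwa [e] at h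
  have eP1 : ∀ x t, P1 x t = (1/2) * (pdt F (x, t)
      - 3*(pdx (pdx F) (x, t))^2/(pdx F (x, t))^4 + 3*(pdx F (x, t))^2) := by
    intro x t
    show deriv (fun p => L p (zt x t) (zxx x t)) (zx x t) = _
    rw [ezx x t, ezt x t, ezxx x t]
    exact Lderiv1 _ _ _ (hne x t)
  have eP2 : ∀ x t, P2 x t = (1/2) * pdx F (x, t) := by
    intro x t
    show deriv (fun q => L (zx x t) q (zxx x t)) (zt x t) = _
    rw [ezx x t, ezt x t, ezxx x t]
    exact Lderiv2 _ _ _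
  have eP3 : ∀ x t, P3 x t = pdx (pdx F) (x, t) / (pdx F (x, t))^3 := by
    intro x t
    show deriv (fun r => L (zx x t) (zt x t) r) (zxx x t) = _
    rw [ezx x t, ezt x t, ezxx x t]
    exact Lderiv3 _ _ _
  have key : ∀ x t,
      deriv (fun y => P1 y t) x + deriv (fun s => P2 x s) t
        - deriv (fun y => deriv (fun y' => P3 y' t) y) x
      = deriv (fun s => zx x s) t
          - deriv (fun y => deriv (fun y' => zxx y' t) y / (zx y t)^3
            - (3/2) * (zxx y t)^2 / (zx y t)^4 - (3/2) * (zx y t)^2) x := by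
    intro x t
    have hax : pdx F (x, t) ≠ 0 := hne x t
    have da : ∀ y : ℝ, HasDerivAt (fun y' => pdx F (y', t)) (pdx (pdx F) (y, t)) y :=
      fun y => hasDerivAt_slice1 h1 y t
    have db : ∀ y : ℝ, HasDerivAt (fun y' => pdx (pdx F) (y', t))
        (pdx (pdx (pdx F)) (y, t)) y := fun y => hasDerivAt_slice1 h2 y t
    have dc : ∀ y : ℝ, HasDerivAt (fun y' => pdx (pdx (pdx F)) (y', t))
        (pdx (pdx (pdx (pdx F))) (y, t)) y := fun y => hasDerivAt_slice1 h3 y t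
    have dT : ∀ y : ℝ, HasDerivAt (fun y' => pdt F (y', t)) (pdx (pdt F) (y, t)) y :=
      fun y => hasDerivAt_slice1 hT y t
    -- T2
    have hT2 : deriv (fun s => P2 x s) t = (1/2) * pdt (pdx F) (x, t) := by
      have e : (fun s => P2 x s) = fun s => (1/2) * pdx F (x, s) := funext fun s => eP2 x s
      rw [e]
      exact ((hasDerivAt_slice2 h1 x t).const_mul (1/2)).deriv
    -- target LHS
    have hTL : deriv (fun s => zx x s) t = pdt (pdx F) (x, t) := by
      have e : (fun s => zx x s) = fun s => pdx F (x, s) := funext fun s => ezx x s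
      rw [e]; exact (hasDerivAt_slice2 h1 x t).deriv
    -- T1
    have hT1 : deriv (fun y => P1 y t) x
        = (1/2) * pdx (pdt F) (x, t)
          - 3 * pdx (pdx F) (x, t) * pdx (pdx (pdx F)) (x, t) / (pdx F (x, t))^4
          + 6 * (pdx (pdx F) (x, t))^3 / (pdx F (x, t))^5
          + 3 * pdx F (x, t) * pdx (pdx F) (x, t) := by
      have e : (fun y => P1 y t) = fun y => (1/2) * (pdt F (y, t)
          - 3*(pdx (pdx F) (y, t))^2/(pdx F (y, t))^4 + 3*(pdx F (y, t))^2) :=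
        funext fun y => eP1 y t
      rw [e]
      have H : HasDerivAt (fun y => (1/2) * (pdt F (y, t)
          - 3*(pdx (pdx F) (y, t))^2/(pdx F (y, t))^4 + 3*(pdx F (y, t))^2)) _ x :=
        (((dT x).sub ((((db x).pow 2).const_mul 3).div ((da x).pow 4)
            (pow_ne_zero 4 hax))).add (((da x).pow 2).const_mul 3)).const_mul (1/2)
      rw [H.deriv]
      simp only [Pi.pow_apply]
      push_cast
      field_simp
      ring
    -- inner derivative of P3
    have eP3t : ∀ y, deriv (fun y' => P3 y' t) y
        = pdx (pdx (pdx F)) (y, t)/(pdx F (y, t))^3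
          - 3*(pdx (pdx F) (y, t))^2/(pdx F (y, t))^4 := by
      intro y
      have e : (fun y' => P3 y' t) = fun y' => pdx (pdx F) (y', t)/(pdx F (y', t))^3 :=
        funext fun y' => eP3 y' t
      rw [e]
      have H : HasDerivAt (fun y' => pdx (pdx F) (y', t)/(pdx F (y', t))^3) _ y :=
        (db y).div ((da y).pow 3) (pow_ne_zero 3 (hne y t))
      rw [H.deriv]
      have hay : pdx F (y, t) ≠ 0 := hne y t
      push_cast
      field_simp
    -- T3
    have hT3 : deriv (fun y => deriv (fun y' => P3 y' t) y) x
        = pdx (pdx (pdx (pdx F))) (x, t) / (pdx F (x, t))^3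
          - 9 * pdx (pdx F) (x, t) * pdx (pdx (pdx F)) (x, t) / (pdx F (x, t))^4
          + 12 * (pdx (pdx F) (x, t))^3 / (pdx F (x, t))^5 := by
      have e : (fun y => deriv (fun y' => P3 y' t) y)
          = fun y => pdx (pdx (pdx F)) (y, t)/(pdx F (y, t))^3
            - 3*(pdx (pdx F) (y, t))^2/(pdx F (y, t))^4 := funext eP3t
      rw [e]
      have H : HasDerivAt (fun y => pdx (pdx (pdx F)) (y, t)/(pdx F (y, t))^3
          - 3*(pdx (pdx F) (y, t))^2/(pdx F (y, t))^4) _ x :=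
        ((dc x).div ((da x).pow 3) (pow_ne_zero 3 hax)).sub
          ((((db x).pow 2).const_mul 3).div ((da x).pow 4) (pow_ne_zero 4 hax))
      rw [H.deriv]
      simp only [Pi.pow_apply]
      push_cast
      field_simp
      ring
    -- RHS
    have einner : ∀ y, deriv (fun y' => zxx y' t) y = pdx (pdx (pdx F)) (y, t) := by
      intro y
      have e : (fun y' => zxx y' t) = fun y' => pdx (pdx F) (y', t) :=
        funext fun y' => ezxx y' t
      rw [e]; exact (hasDerivAt_slice1 h2 y t).deriv
    have hR : deriv (fun y => deriv (fun y' => zxx y' t) y / (zx y t)^3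
          - (3/2) * (zxx y t)^2 / (zx y t)^4 - (3/2) * (zx y t)^2) x
        = pdx (pdx (pdx (pdx F))) (x, t) / (pdx F (x, t))^3
          - 6 * pdx (pdx F) (x, t) * pdx (pdx (pdx F)) (x, t) / (pdx F (x, t))^4
          + 6 * (pdx (pdx F) (x, t))^3 / (pdx F (x, t))^5
          - 3 * pdx F (x, t) * pdx (pdx F) (x, t) := by
      have e : (fun y => deriv (fun y' => zxx y' t) y / (zx y t)^3
            - (3/2) * (zxx y t)^2 / (zx y t)^4 - (3/2) * (zx y t)^2)
          = fun y => pdx (pdx (pdx F)) (y, t) / (pdx F (y, t))^3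
            - (3/2) * (pdx (pdx F) (y, t))^2 / (pdx F (y, t))^4
            - (3/2) * (pdx F (y, t))^2 :=
        funext fun y => by rw [einner y, ezxx y t, ezx y t]
      rw [e]
      have H : HasDerivAt (fun y => pdx (pdx (pdx F)) (y, t) / (pdx F (y, t))^3
          - (3/2) * (pdx (pdx F) (y, t))^2 / (pdx F (y, t))^4
          - (3/2) * (pdx F (y, t))^2) _ x :=
        (((dc x).div ((da x).pow 3) (pow_ne_zero 3 hax)).sub
          ((((db x).pow 2).const_mul (3/2)).div ((da x).pow 4) (pow_ne_zero 4 hax))).sub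
          (((da x).pow 2).const_mul (3/2))
      rw [H.deriv]
      simp only [Pi.pow_apply]
      push_cast
      field_simp
      ring
    have hcomm : pdx (pdt F) (x, t) = pdt (pdx F) (x, t) := pdx_pdt_comm hF (x, t)
    rw [hT1, hT2, hT3, hTL, hR, hcomm]
    ring
  constructor
  · intro h x t
    have h1 := h x t
    have h2 := key x t
    linarith
  · intro h x t
    have h1 := h x t
    have h2 := key x t
    linarith
end

section
/- Let u, w: ℝ² → ℝ be smooth with u nowhere zero and ε real. Define h(u, w, u_x, w_x) = 2[uw − (w³ − 2εw_x)/u]. Then δH/δu := ∂h/∂u = 2[w + w³/u² − 2εw_x/u²] and δH/δw := ∂h/∂w − ∂_x(∂h/∂w_x) = 2u − 6w²/u + 4ε u_x/u², and the system u_t = (1/4)∂_x(δH/δu), w_t = −(1/4)∂_x(δH/δw) coincides with u_t = (1/2)∂_x[w + w³/u² − 2εw_x/u²], w_t = (1/2)∂_x[3w²/u − u − 2εu_x/u²]. -/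
/-- The local Hamiltonian structure (4.16) of system (4.15), with Hamiltonian density
`h = 2[uw − (w³ − 2εw_x)/u]` and brackets `{u,u} = −{w,w} = (1/4)δ′`. -/
theorem stmt_14 (ε : ℝ) (u w : ℝ → ℝ → ℝ)
    (hu : ContDiff ℝ (⊤ : ℕ∞) (Function.uncurry u))
    (hw : ContDiff ℝ (⊤ : ℕ∞) (Function.uncurry w))
    (hu0 : ∀ x t, u x t ≠ 0) :
    let h : ℝ → ℝ → ℝ → ℝ → ℝ := fun U W Ux Wx => 2 * (U * W - (W^3 - 2*ε*Wx) / U)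
    let ux : ℝ → ℝ → ℝ := fun x t => deriv (fun y => u y t) x
    let wx : ℝ → ℝ → ℝ := fun x t => deriv (fun y => w y t) x
    let δHu : ℝ → ℝ → ℝ := fun x t =>
      deriv (fun U => h U (w x t) (ux x t) (wx x t)) (u x t)
    let δHw : ℝ → ℝ → ℝ := fun x t =>
      deriv (fun W => h (u x t) W (ux x t) (wx x t)) (w x t)
        - deriv (fun y => deriv (fun Wx => h (u y t) (w y t) (ux y t) Wx) (wx y t)) x
    (∀ x t, δHu x t = 2 * (w x t + (w x t)^3 / (u x t)^2 - 2*ε * wx x t / (u x t)^2)) ∧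
    (∀ x t, δHw x t = 2 * u x t - 6 * (w x t)^2 / u x t + 4*ε * ux x t / (u x t)^2) ∧
    ((∀ x t, deriv (fun s => u x s) t = (1/4) * deriv (fun y => δHu y t) x ∧
        deriv (fun s => w x s) t = -(1/4) * deriv (fun y => δHw y t) x)
      ↔ (∀ x t, deriv (fun s => u x s) t =
            (1/2) * deriv (fun y => w y t + (w y t)^3 / (u y t)^2
              - 2*ε * wx y t / (u y t)^2) x ∧
          deriv (fun s => w x s) t =
            (1/2) * deriv (fun y => 3 * (w y t)^2 / u y t - u y t
              - 2*ε * ux y t / (u y t)^2) x)) := by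
  intro h ux wx δHu δHw
  -- differentiability of y ↦ u y t
  have hu1 : ∀ t : ℝ, Differentiable ℝ (fun y => u y t) := by
    intro t
    have : ContDiff ℝ (⊤ : ℕ∞) (fun y : ℝ => u y t) :=
      hu.comp (contDiff_id.prodMk contDiff_const)
    exact this.differentiable (by simp)
  have P1 : ∀ x t, δHu x t
      = 2 * (w x t + (w x t)^3 / (u x t)^2 - 2*ε * wx x t / (u x t)^2) := by
    intro x t
    have ha := hu0 x t
    have hd : HasDerivAt
        (fun U => 2 * (U * w x t - ((w x t)^3 - 2*ε*wx x t) / U))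
        (2 * (1 * w x t -
          (0 * u x t - ((w x t)^3 - 2*ε*wx x t) * 1) / (u x t)^2)) (u x t) :=
      (((hasDerivAt_id (u x t)).mul_const (w x t)).sub
        ((hasDerivAt_const (u x t) ((w x t)^3 - 2*ε*wx x t)).div
          (hasDerivAt_id (u x t)) ha)).const_mul 2
    simp only [δHu, h]
    rw [hd.deriv]
    field_simp
    ring
  have Pin : ∀ (y t : ℝ),
      deriv (fun Wx => h (u y t) (w y t) (ux y t) Wx) (wx y t) = 4*ε / u y t := by
    intro y t
    have hd : HasDerivAt
        (fun Wx => 2 * (u y t * w y t - ((w y t)^3 - 2*ε*Wx) / u y t))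
        (2 * ((0 : ℝ) - (0 - 2*ε*1) / u y t)) (wx y t) :=
      ((hasDerivAt_const (wx y t) (u y t * w y t)).sub
        (((hasDerivAt_const (wx y t) ((w y t)^3)).sub
          ((hasDerivAt_id (wx y t)).const_mul (2*ε))).div_const (u y t))).const_mul 2
    simp only [h]
    rw [hd.deriv]
    ring
  have P2 : ∀ x t, δHw x t
      = 2 * u x t - 6 * (w x t)^2 / u x t + 4*ε * ux x t / (u x t)^2 := by
    intro x t
    have ha := hu0 x t
    have hd1 : HasDerivAt
        (fun W => 2 * (u x t * W - (W^3 - 2*ε*wx x t) / u x t))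
        (2 * (u x t * 1 - (3:ℕ) * (w x t)^(3-1) / u x t)) (w x t) :=
      ((((hasDerivAt_id (w x t)).const_mul (u x t)).sub
        (((hasDerivAt_pow 3 (w x t)).sub_const (2*ε*wx x t)).div_const
          (u x t))).const_mul 2)
    have e2 : (fun y => deriv (fun Wx => h (u y t) (w y t) (ux y t) Wx) (wx y t))
        = fun y => 4*ε / u y t := funext fun y => Pin y t
    have hd2 : HasDerivAt (fun y => 4*ε / u y t)
        ((0 * u x t - 4*ε * ux x t) / (u x t)^2) x :=
      (hasDerivAt_const x (4*ε)).div ((hu1 t x).hasDerivAt) ha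
    simp only [δHw, h]
    rw [e2, hd1.deriv, hd2.deriv]
    field_simp
    ring
  refine ⟨P1, P2, ?_⟩
  have EA : ∀ x t, (1/4 : ℝ) * deriv (fun y => δHu y t) x
      = (1/2) * deriv (fun y => w y t + (w y t)^3 / (u y t)^2
          - 2*ε * wx y t / (u y t)^2) x := by
    intro x t
    have e : (fun y => δHu y t)
        = fun y => 2 * (w y t + (w y t)^3 / (u y t)^2 - 2*ε * wx y t / (u y t)^2) :=
      funext fun y => P1 y t
    rw [e, deriv_const_mul_field]
    ring
  have EB : ∀ x t, -(1/4 : ℝ) * deriv (fun y => δHw y t) x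
      = (1/2) * deriv (fun y => 3 * (w y t)^2 / u y t - u y t
          - 2*ε * ux y t / (u y t)^2) x := by
    intro x t
    have e : (fun y => δHw y t)
        = fun y => (-2) * (3 * (w y t)^2 / u y t - u y t - 2*ε * ux y t / (u y t)^2) :=
      funext fun y => by rw [P2 y t]; ring
    rw [e, deriv_const_mul_field]
    ring
  constructor
  · intro H x t
    obtain ⟨h1, h2⟩ := H x t
    exact ⟨h1.trans (EA x t), h2.trans (EB x t)⟩
  · intro H x t
    obtain ⟨h1, h2⟩ := H x t
    exact ⟨h1.trans (EA x t).symm, h2.trans (EB x t).symm⟩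
end

section
/- Let ε be real and let a, υ: ℝ² → ℝ be smooth solutions of the Modified Kaup–Boussinesq system a_y = ∂_z[(1/2)υa − ευ_z], υ_y = ∂_z[(1/4)(3υ² − a²) − εa_z]. Define η = (υ² − a²)/4 − εa_z. Then (υ, η) solves the Kaup–Boussinesq system: υ_y = ∂_z[(1/2)υ² + η] and η_y = ∂_z[υη + ε²υ_zz]. -/
open Function

private lemma slice1_contDiff {f : ℝ → ℝ → ℝ} (hf : ContDiff ℝ (⊤ : ℕ∞) (uncurry f)) (y : ℝ) :
    ContDiff ℝ (⊤ : ℕ∞) (fun z => f z y) :=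
  hf.comp (contDiff_id.prodMk contDiff_const)

private lemma slice2_contDiff {f : ℝ → ℝ → ℝ} (hf : ContDiff ℝ (⊤ : ℕ∞) (uncurry f)) (z : ℝ) :
    ContDiff ℝ (⊤ : ℕ∞) (fun s => f z s) :=
  hf.comp (contDiff_const.prodMk contDiff_id)

private lemma pd1_eq_fderiv {f : ℝ → ℝ → ℝ} (hf : ContDiff ℝ (⊤ : ℕ∞) (uncurry f)) (z y : ℝ) :
    deriv (fun t => f t y) z = fderiv ℝ (uncurry f) (z, y) (1, 0) := by
  have hF := (hf.differentiable (by simp) (z, y)).hasFDerivAt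
  have hL : HasFDerivAt (fun t : ℝ => (t, y))
      ((ContinuousLinearMap.id ℝ ℝ).prod 0) z :=
    HasFDerivAt.prodMk (hasFDerivAt_id z) (hasFDerivAt_const y z)
  have h := (hF.comp z hL).hasDerivAt.deriv
  simpa [Function.comp_def] using h

private lemma pd2_eq_fderiv {f : ℝ → ℝ → ℝ} (hf : ContDiff ℝ (⊤ : ℕ∞) (uncurry f)) (z y : ℝ) :
    deriv (fun s => f z s) y = fderiv ℝ (uncurry f) (z, y) (0, 1) := by
  have hF := (hf.differentiable (by simp) (z, y)).hasFDerivAt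
  have hL : HasFDerivAt (fun s : ℝ => (z, s))
      ((0 : ℝ →L[ℝ] ℝ).prod (ContinuousLinearMap.id ℝ ℝ)) y :=
    HasFDerivAt.prodMk (hasFDerivAt_const z y) (hasFDerivAt_id y)
  have h := (hF.comp y hL).hasDerivAt.deriv
  simpa [Function.comp_def] using h

private lemma uncurry_pd1_eq {f : ℝ → ℝ → ℝ} (hf : ContDiff ℝ (⊤ : ℕ∞) (uncurry f)) :
    uncurry (fun z y => deriv (fun t => f t y) z)
      = fun p : ℝ × ℝ => fderiv ℝ (uncurry f) p ((1 : ℝ), (0 : ℝ)) := by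
  funext p
  exact pd1_eq_fderiv hf p.1 p.2

private lemma uncurry_pd2_eq {f : ℝ → ℝ → ℝ} (hf : ContDiff ℝ (⊤ : ℕ∞) (uncurry f)) :
    uncurry (fun z y => deriv (fun s => f z s) y)
      = fun p : ℝ × ℝ => fderiv ℝ (uncurry f) p ((0 : ℝ), (1 : ℝ)) := by
  funext p
  exact pd2_eq_fderiv hf p.1 p.2

private lemma fderiv_apply_contDiff {f : ℝ → ℝ → ℝ} (hf : ContDiff ℝ (⊤ : ℕ∞) (uncurry f))
    (c : ℝ × ℝ) :
    ContDiff ℝ (⊤ : ℕ∞) (fun p : ℝ × ℝ => fderiv ℝ (uncurry f) p c) :=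
  (hf.fderiv_right (by simp)).clm_apply contDiff_const

private lemma pd1_contDiff {f : ℝ → ℝ → ℝ} (hf : ContDiff ℝ (⊤ : ℕ∞) (uncurry f)) :
    ContDiff ℝ (⊤ : ℕ∞) (uncurry (fun z y => deriv (fun t => f t y) z)) := by
  rw [uncurry_pd1_eq hf]
  exact fderiv_apply_contDiff hf _

private lemma pd2_contDiff {f : ℝ → ℝ → ℝ} (hf : ContDiff ℝ (⊤ : ℕ∞) (uncurry f)) :
    ContDiff ℝ (⊤ : ℕ∞) (uncurry (fun z y => deriv (fun s => f z s) y)) := by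
  rw [uncurry_pd2_eq hf]
  exact fderiv_apply_contDiff hf _

private lemma fderiv_fderiv_apply {F : ℝ × ℝ → ℝ} (hF : ContDiff ℝ (⊤ : ℕ∞) F)
    (c x : ℝ × ℝ) :
    fderiv ℝ (fun p => fderiv ℝ F p c) x = (fderiv ℝ (fderiv ℝ F) x).flip c := by
  rw [fderiv_clm_apply ((hF.fderiv_right (m := 1) (by exact WithTop.coe_le_coe.mpr le_top)).differentiable (by simp) x)
    (differentiableAt_const c)]
  simp

private lemma clairaut {f : ℝ → ℝ → ℝ} (hf : ContDiff ℝ (⊤ : ℕ∞) (uncurry f)) (z y : ℝ) :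
    deriv (fun s => deriv (fun t => f t s) z) y
      = deriv (fun z' => deriv (fun s => f z' s) y) z := by
  have hsym : IsSymmSndFDerivAt ℝ (uncurry f) (z, y) :=
    hf.contDiffAt.isSymmSndFDerivAt
      (by rw [minSmoothness_of_isRCLikeNormedField]; exact WithTop.coe_le_coe.mpr le_top)
  have h1 := pd2_eq_fderiv (pd1_contDiff hf) z y
  have h2 := pd1_eq_fderiv (pd2_contDiff hf) z y
  rw [h1, h2, uncurry_pd1_eq hf, uncurry_pd2_eq hf,
    fderiv_fderiv_apply hf, fderiv_fderiv_apply hf]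
  simpa using hsym.eq (0, 1) (1, 0)

/-- The first Miura transformation (6.6): solutions of the Modified Kaup–Boussinesq
system (6.7) map to solutions of the Kaup–Boussinesq system (6.1) via
`η = (υ² − a²)/4 − εa_z`. -/
theorem stmt_15 (ε : ℝ) (a v : ℝ → ℝ → ℝ)
    (ha : ContDiff ℝ (⊤ : ℕ∞) (Function.uncurry a))
    (hv : ContDiff ℝ (⊤ : ℕ∞) (Function.uncurry v))
    (hsys1 : ∀ z y, deriv (fun s => a z s) y =
      deriv (fun z' => (1/2) * v z' y * a z' y - ε * deriv (fun t => v t y) z') z)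
    (hsys2 : ∀ z y, deriv (fun s => v z s) y =
      deriv (fun z' => (1/4) * (3 * (v z' y)^2 - (a z' y)^2)
        - ε * deriv (fun t => a t y) z') z) :
    let η : ℝ → ℝ → ℝ := fun z y =>
      ((v z y)^2 - (a z y)^2) / 4 - ε * deriv (fun t => a t y) z
    (∀ z y, deriv (fun s => v z s) y =
        deriv (fun z' => (1/2) * (v z' y)^2 + η z' y) z) ∧
    (∀ z y, deriv (fun s => η z s) y =
        deriv (fun z' => v z' y * η z' y
          + ε^2 * deriv (fun t => deriv (fun t' => v t' y) t) z') z) := by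
  intro η
  have ha1 : ContDiff ℝ (⊤ : ℕ∞) (uncurry (fun z y => deriv (fun t => a t y) z)) :=
    pd1_contDiff ha
  have hv1 : ContDiff ℝ (⊤ : ℕ∞) (uncurry (fun z y => deriv (fun t => v t y) z)) :=
    pd1_contDiff hv
  have ha2 : ContDiff ℝ (⊤ : ℕ∞)
      (uncurry (fun z y => deriv (fun t => deriv (fun t' => a t' y) t) z)) :=
    pd1_contDiff ha1
  have hv2 : ContDiff ℝ (⊤ : ℕ∞)
      (uncurry (fun z y => deriv (fun t => deriv (fun t' => v t' y) t) z)) :=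
    pd1_contDiff hv1
  -- differentiability of z-slices
  have Da : ∀ y z : ℝ, DifferentiableAt ℝ (fun t => a t y) z := fun y z =>
    ((slice1_contDiff ha y).differentiable (by simp)) z
  have Dv : ∀ y z : ℝ, DifferentiableAt ℝ (fun t => v t y) z := fun y z =>
    ((slice1_contDiff hv y).differentiable (by simp)) z
  have Da1 : ∀ y z : ℝ, DifferentiableAt ℝ (fun t => deriv (fun t' => a t' y) t) z :=
    fun y z => ((slice1_contDiff ha1 y).differentiable (by simp)) z
  have Dv1 : ∀ y z : ℝ, DifferentiableAt ℝ (fun t => deriv (fun t' => v t' y) t) z :=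
    fun y z => ((slice1_contDiff hv1 y).differentiable (by simp)) z
  have Dv2 : ∀ y z : ℝ,
      DifferentiableAt ℝ (fun t => deriv (fun t' => deriv (fun t'' => v t'' y) t') t) z :=
    fun y z => ((slice1_contDiff hv2 y).differentiable (by simp)) z
  -- differentiability of y-slices
  have Da' : ∀ z y : ℝ, DifferentiableAt ℝ (fun s => a z s) y := fun z y =>
    ((slice2_contDiff ha z).differentiable (by simp)) y
  have Dv' : ∀ z y : ℝ, DifferentiableAt ℝ (fun s => v z s) y := fun z y =>
    ((slice2_contDiff hv z).differentiable (by simp)) y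
  have Da1' : ∀ z y : ℝ, DifferentiableAt ℝ (fun s => deriv (fun t => a t s) z) y :=
    fun z y => ((slice2_contDiff ha1 z).differentiable (by simp)) y
  -- expansion of ∂_z F where F is the flux in hsys1
  have hF : ∀ z y : ℝ,
      deriv (fun z' => (1/2) * v z' y * a z' y - ε * deriv (fun t => v t y) z') z
        = (1/2) * (deriv (fun t => v t y) z) * a z y
          + (1/2) * v z y * (deriv (fun t => a t y) z)
          - ε * (deriv (fun t => deriv (fun t' => v t' y) t) z) := by
    intro z y
    have h := ((((Dv y z).hasDerivAt.const_mul (1/2 : ℝ)).mul (Da y z).hasDerivAt).sub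
      ((Dv1 y z).hasDerivAt.const_mul ε)).deriv
    erw [h]; try ring
  -- expansion of ∂_z G where G is the flux in hsys2
  have hG : ∀ z y : ℝ,
      deriv (fun z' => (1/4) * (3 * (v z' y)^2 - (a z' y)^2)
          - ε * deriv (fun t => a t y) z') z
        = (1/4) * (6 * v z y * (deriv (fun t => v t y) z)
            - 2 * a z y * (deriv (fun t => a t y) z))
          - ε * (deriv (fun t => deriv (fun t' => a t' y) t) z) := by
    intro z y
    have h := (((((Dv y z).hasDerivAt.pow 2).const_mul (3 : ℝ)).sub
      ((Da y z).hasDerivAt.pow 2)).const_mul (1/4 : ℝ)).sub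
      ((Da1 y z).hasDerivAt.const_mul ε) |>.deriv
    erw [h]; try ring
  constructor
  · intro z y
    have he : (fun z' => (1/4) * (3 * (v z' y)^2 - (a z' y)^2)
          - ε * deriv (fun t => a t y) z')
        = fun z' => (1/2) * (v z' y)^2 + η z' y := by
      funext z'
      simp only [η]
      ring
    rw [hsys2 z y, ← he]
  · intro z y
    -- LHS: differentiate η in y
    have hL : deriv (fun s => η z s) y
        = (2 * v z y * deriv (fun s => v z s) y
            - 2 * a z y * deriv (fun s => a z s) y) / 4
          - ε * deriv (fun s => deriv (fun t => a t s) z) y := by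
      have h := ((((Dv' z y).hasDerivAt.pow 2).sub
        ((Da' z y).hasDerivAt.pow 2)).div_const 4).sub
        ((Da1' z y).hasDerivAt.const_mul ε) |>.deriv
      simp only [η]
      erw [h]; try ring
    -- mixed partial: ∂_y (a_z) = ∂_z (a_y) = ∂_z (∂_z F)
    have hmix : deriv (fun s => deriv (fun t => a t s) z) y
        = deriv (fun z' => (1/2) * (deriv (fun t => v t y) z') * a z' y
            + (1/2) * v z' y * (deriv (fun t => a t y) z')
            - ε * (deriv (fun t => deriv (fun t' => v t' y) t) z')) z := by
      rw [clairaut ha z y]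
      congr 1
      funext z'
      rw [hsys1 z' y, hF z' y]
    have hmixval : deriv (fun s => deriv (fun t => a t s) z) y
        = (1/2) * (deriv (fun t => deriv (fun t' => v t' y) t) z) * a z y
          + (deriv (fun t => v t y) z) * (deriv (fun t => a t y) z)
          + (1/2) * v z y * (deriv (fun t => deriv (fun t' => a t' y) t) z)
          - ε * (deriv (fun t => deriv (fun t' => deriv (fun t'' => v t'' y) t') t) z) := by
      rw [hmix]
      have h := (((((Dv1 y z).hasDerivAt.const_mul (1/2 : ℝ)).mul (Da y z).hasDerivAt).add
        (((Dv y z).hasDerivAt.const_mul (1/2 : ℝ)).mul (Da1 y z).hasDerivAt)).sub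
        ((Dv2 y z).hasDerivAt.const_mul ε)).deriv
      erw [h]; try ring
    -- RHS expansion
    have hR : deriv (fun z' => v z' y * η z' y
          + ε^2 * deriv (fun t => deriv (fun t' => v t' y) t) z') z
        = (deriv (fun t => v t y) z) * η z y
          + v z y * ((2 * v z y * (deriv (fun t => v t y) z)
              - 2 * a z y * (deriv (fun t => a t y) z)) / 4
            - ε * (deriv (fun t => deriv (fun t' => a t' y) t) z))
          + ε^2 * (deriv (fun t => deriv (fun t' => deriv (fun t'' => v t'' y) t') t) z) := by
      have hηd : HasDerivAt (fun z' => η z' y)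
          ((2 * v z y ^ 1 * (deriv (fun t => v t y) z)
            - 2 * a z y ^ 1 * (deriv (fun t => a t y) z)) / 4
            - ε * (deriv (fun t => deriv (fun t' => a t' y) t) z)) z := by
        simp only [η]
        exact (((Dv y z).hasDerivAt.pow 2).sub
          ((Da y z).hasDerivAt.pow 2)).div_const 4 |>.sub
          ((Da1 y z).hasDerivAt.const_mul ε)
      have h := (((Dv y z).hasDerivAt.mul hηd).add
        ((Dv2 y z).hasDerivAt.const_mul (ε^2))).deriv
      erw [h]; try ring
    rw [hL, hR, hmixval, hsys2 z y, hG z y, hsys1 z y, hF z y]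
    simp only [η]
    ring
end

section
/- Let ε be real and let a, b: ℝ² → ℝ be smooth solutions of the Twice-Modified Kaup–Boussinesq system b_y = (1/2)∂_z[a(b² − 1) + 2εbb_z], a_y = (1/2)∂_z[a²b − 2εba_z − 4ε²b_zz]. Define υ = ab + 2εb_z. Then (a, υ) solves the Modified Kaup–Boussinesq system: a_y = ∂_z[(1/2)υa − ευ_z] and υ_y = ∂_z[(1/4)(3υ² − a²) − εa_z]. -/
open Function

noncomputable def p1 (f : ℝ → ℝ → ℝ) : ℝ → ℝ → ℝ :=
  fun z y => fderiv ℝ (uncurry f) (z, y) (1, 0)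

noncomputable def p2 (f : ℝ → ℝ → ℝ) : ℝ → ℝ → ℝ :=
  fun z y => fderiv ℝ (uncurry f) (z, y) (0, 1)

lemma hasDerivAt_fst' (f : ℝ → ℝ → ℝ) (hf : ContDiff ℝ (⊤ : ℕ∞) (uncurry f)) (z y : ℝ) :
    HasDerivAt (fun t => f t y) (p1 f z y) z := by
  have h := ((hf.differentiable (by simp)) (z, y)).hasFDerivAt
  have hcurve : HasDerivAt (fun t : ℝ => (t, y)) ((1:ℝ), (0:ℝ)) z :=
    (hasDerivAt_id z).prodMk (hasDerivAt_const z y)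
  exact h.comp_hasDerivAt z hcurve

lemma hasDerivAt_snd' (f : ℝ → ℝ → ℝ) (hf : ContDiff ℝ (⊤ : ℕ∞) (uncurry f)) (z y : ℝ) :
    HasDerivAt (fun s => f z s) (p2 f z y) y := by
  have h := ((hf.differentiable (by simp)) (z, y)).hasFDerivAt
  have hcurve : HasDerivAt (fun s : ℝ => (z, s)) ((0:ℝ), (1:ℝ)) y :=
    (hasDerivAt_const y z).prodMk (hasDerivAt_id y)
  exact h.comp_hasDerivAt y hcurve

lemma contDiff_p1 {f : ℝ → ℝ → ℝ} (hf : ContDiff ℝ (⊤ : ℕ∞) (uncurry f)) :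
    ContDiff ℝ (⊤ : ℕ∞) (uncurry (p1 f)) :=
  (hf.fderiv_right (by simp)).clm_apply contDiff_const

lemma contDiff_p2 {f : ℝ → ℝ → ℝ} (hf : ContDiff ℝ (⊤ : ℕ∞) (uncurry f)) :
    ContDiff ℝ (⊤ : ℕ∞) (uncurry (p2 f)) :=
  (hf.fderiv_right (by simp)).clm_apply contDiff_const

lemma clairaut_s16 {f : ℝ → ℝ → ℝ} (hf : ContDiff ℝ (⊤ : ℕ∞) (uncurry f)) (z y : ℝ) :
    p1 (p2 f) z y = p2 (p1 f) z y := by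
  set F := uncurry f with hF
  set f' := fderiv ℝ F with hf'
  have hdf' : ∀ p, HasFDerivAt F (f' p) p := fun p =>
    ((hf.differentiable (by simp)) p).hasFDerivAt
  have hf'd : Differentiable ℝ f' := (hf.fderiv_right (m := (⊤ : ℕ∞)) (by simp)).differentiable (by simp)
  have hf'' : HasFDerivAt f' (fderiv ℝ f' (z, y)) (z, y) := (hf'd (z, y)).hasFDerivAt
  have hsymm := second_derivative_symmetric hdf' hf'' ((1:ℝ), (0:ℝ)) ((0:ℝ), (1:ℝ))
  have h1 : HasFDerivAt (fun p => f' p ((0:ℝ), (1:ℝ)))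
      ((ContinuousLinearMap.apply ℝ ℝ ((0:ℝ), (1:ℝ))).comp (fderiv ℝ f' (z, y))) (z, y) :=
    (ContinuousLinearMap.apply ℝ ℝ ((0:ℝ), (1:ℝ))).hasFDerivAt.comp (z, y) hf''
  have h2 : HasFDerivAt (fun p => f' p ((1:ℝ), (0:ℝ)))
      ((ContinuousLinearMap.apply ℝ ℝ ((1:ℝ), (0:ℝ))).comp (fderiv ℝ f' (z, y))) (z, y) :=
    (ContinuousLinearMap.apply ℝ ℝ ((1:ℝ), (0:ℝ))).hasFDerivAt.comp (z, y) hf''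
  have e1 : p1 (p2 f) z y = fderiv ℝ (fun p => f' p ((0:ℝ), (1:ℝ))) (z, y) ((1:ℝ), (0:ℝ)) := rfl
  have e2 : p2 (p1 f) z y = fderiv ℝ (fun p => f' p ((1:ℝ), (0:ℝ))) (z, y) ((0:ℝ), (1:ℝ)) := rfl
  rw [e1, e2, h1.fderiv, h2.fderiv]
  simpa using hsymm

/-- The second Miura transformation (6.11): solutions of the Twice-Modified
Kaup–Boussinesq system (6.12) map to solutions of the Modified Kaup–Boussinesq
system (6.7) via `υ = ab + 2εb_z`. -/
theorem stmt_16 (ε : ℝ) (a b : ℝ → ℝ → ℝ)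
    (ha : ContDiff ℝ (⊤ : ℕ∞) (Function.uncurry a))
    (hb : ContDiff ℝ (⊤ : ℕ∞) (Function.uncurry b))
    (hsys1 : ∀ z y, deriv (fun s => b z s) y =
      (1/2) * deriv (fun z' => a z' y * ((b z' y)^2 - 1)
        + 2*ε * b z' y * deriv (fun t => b t y) z') z)
    (hsys2 : ∀ z y, deriv (fun s => a z s) y =
      (1/2) * deriv (fun z' => (a z' y)^2 * b z' y
        - 2*ε * b z' y * deriv (fun t => a t y) z'
        - 4*ε^2 * deriv (fun t => deriv (fun t' => b t' y) t) z') z) :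
    let v : ℝ → ℝ → ℝ := fun z y => a z y * b z y + 2*ε * deriv (fun t => b t y) z
    (∀ z y, deriv (fun s => a z s) y =
        deriv (fun z' => (1/2) * v z' y * a z' y - ε * deriv (fun t => v t y) z') z) ∧
    (∀ z y, deriv (fun s => v z s) y =
        deriv (fun z' => (1/4) * (3 * (v z' y)^2 - (a z' y)^2)
          - ε * deriv (fun t => a t y) z') z) := by
  intro v
  have hb1 := contDiff_p1 hb
  have hb2 := contDiff_p1 hb1
  have ha1 := contDiff_p1 ha
  have hda : ∀ (t y' : ℝ), deriv (fun u => a u y') t = p1 a t y' :=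
    fun t y' => (hasDerivAt_fst' a ha t y').deriv
  have hdb : ∀ (t y' : ℝ), deriv (fun u => b u y') t = p1 b t y' :=
    fun t y' => (hasDerivAt_fst' b hb t y').deriv
  have hdb1 : ∀ (t y' : ℝ), deriv (fun u => p1 b u y') t = p1 (p1 b) t y' :=
    fun t y' => (hasDerivAt_fst' (p1 b) hb1 t y').deriv
  simp only [hda, hdb, hdb1] at hsys1 hsys2
  unfold v
  simp only [hda, hdb, hdb1]
  constructor
  · intro z y
    have hA : ∀ t, HasDerivAt (fun u => a u y) (p1 a t y) t := fun t => hasDerivAt_fst' a ha t y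
    have hB : ∀ t, HasDerivAt (fun u => b u y) (p1 b t y) t := fun t => hasDerivAt_fst' b hb t y
    have hA1 : ∀ t, HasDerivAt (fun u => p1 a u y) (p1 (p1 a) t y) t :=
      fun t => hasDerivAt_fst' (p1 a) ha1 t y
    have hB1 : ∀ t, HasDerivAt (fun u => p1 b u y) (p1 (p1 b) t y) t :=
      fun t => hasDerivAt_fst' (p1 b) hb1 t y
    have hB2 : ∀ t, HasDerivAt (fun u => p1 (p1 b) u y) (p1 (p1 (p1 b)) t y) t :=
      fun t => hasDerivAt_fst' (p1 (p1 b)) hb2 t y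
    have hinner : ∀ t, deriv (fun u => a u y * b u y + 2 * ε * p1 b u y) t
        = p1 a t y * b t y + a t y * p1 b t y + 2 * ε * p1 (p1 b) t y := by
      intro t
      have h : HasDerivAt (fun u => a u y * b u y + 2 * ε * p1 b u y)
          (p1 a t y * b t y + a t y * p1 b t y + 2 * ε * p1 (p1 b) t y) t := by
        have := ((hA t).mul (hB t)).add ((hB1 t).const_mul (2 * ε))
        convert this using 1
        all_goals first | rfl | (simp only [Pi.mul_apply, Pi.add_apply, Pi.sub_apply, Pi.pow_apply, Nat.cast_ofNat, Nat.reduceSub, pow_one]; ring)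
      exact h.deriv
    simp only [hinner]
    have hG : HasDerivAt (fun z' => 1 / 2 * (a z' y * b z' y + 2 * ε * p1 b z' y) * a z' y -
        ε * (p1 a z' y * b z' y + a z' y * p1 b z' y + 2 * ε * p1 (p1 b) z' y))
        (1 / 2 * (p1 a z y * b z y + a z y * p1 b z y + 2 * ε * p1 (p1 b) z y) * a z y
          + 1 / 2 * (a z y * b z y + 2 * ε * p1 b z y) * p1 a z y
          - ε * (p1 (p1 a) z y * b z y + 2 * p1 a z y * p1 b z y + a z y * p1 (p1 b) z y
              + 2 * ε * p1 (p1 (p1 b)) z y)) z := by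
      have := ((((hA z).mul (hB z)).add ((hB1 z).const_mul (2 * ε))).const_mul (1/2)).mul (hA z)
        |>.sub (((((hA1 z).mul (hB z)).add ((hA z).mul (hB1 z))).add
          ((hB2 z).const_mul (2 * ε))).const_mul ε)
      convert this using 1
      all_goals first | rfl | (simp only [Pi.mul_apply, Pi.add_apply, Pi.sub_apply, Pi.pow_apply, Nat.cast_ofNat, Nat.reduceSub, pow_one]; ring)
    have hF2 : HasDerivAt (fun z' => a z' y ^ 2 * b z' y - 2 * ε * b z' y * p1 a z' y
        - 4 * ε ^ 2 * p1 (p1 b) z' y)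
        (2 * a z y * p1 a z y * b z y + a z y ^ 2 * p1 b z y
          - 2 * ε * (p1 b z y * p1 a z y + b z y * p1 (p1 a) z y)
          - 4 * ε ^ 2 * p1 (p1 (p1 b)) z y) z := by
      have := (((hA z).pow 2).mul (hB z)).sub (((hB z).const_mul (2 * ε)).mul (hA1 z))
        |>.sub ((hB2 z).const_mul (4 * ε ^ 2))
      convert this using 1
      all_goals first | rfl | (simp only [Pi.mul_apply, Pi.add_apply, Pi.sub_apply, Pi.pow_apply, Nat.cast_ofNat, Nat.reduceSub, pow_one]; ring)
    rw [hG.deriv, hsys2 z y, hF2.deriv]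
    ring
  · intro z y
    have hA : ∀ t, HasDerivAt (fun u => a u y) (p1 a t y) t := fun t => hasDerivAt_fst' a ha t y
    have hB : ∀ t, HasDerivAt (fun u => b u y) (p1 b t y) t := fun t => hasDerivAt_fst' b hb t y
    have hA1 : ∀ t, HasDerivAt (fun u => p1 a u y) (p1 (p1 a) t y) t :=
      fun t => hasDerivAt_fst' (p1 a) ha1 t y
    have hB1 : ∀ t, HasDerivAt (fun u => p1 b u y) (p1 (p1 b) t y) t :=
      fun t => hasDerivAt_fst' (p1 b) hb1 t y
    have hB2 : ∀ t, HasDerivAt (fun u => p1 (p1 b) u y) (p1 (p1 (p1 b)) t y) t :=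
      fun t => hasDerivAt_fst' (p1 (p1 b)) hb2 t y
    -- expansion of b_y = p2 b via hsys1
    have hD1 : ∀ t, HasDerivAt (fun z' => a z' y * (b z' y ^ 2 - 1) + 2 * ε * b z' y * p1 b z' y)
        (p1 a t y * (b t y ^ 2 - 1) + 2 * a t y * b t y * p1 b t y
          + 2 * ε * (p1 b t y * p1 b t y + b t y * p1 (p1 b) t y)) t := by
      intro t
      have := ((hA t).mul (((hB t).pow 2).sub_const 1)).add
        ((((hB t).const_mul (2 * ε)).mul (hB1 t)))
      convert this using 1
      all_goals first | rfl | (simp only [Pi.mul_apply, Pi.add_apply, Pi.sub_apply, Pi.pow_apply, Nat.cast_ofNat, Nat.reduceSub, pow_one]; ring)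
    have e_p2b : ∀ t, p2 b t y = 1 / 2 * (p1 a t y * (b t y ^ 2 - 1)
        + 2 * a t y * b t y * p1 b t y
        + 2 * ε * (p1 b t y * p1 b t y + b t y * p1 (p1 b) t y)) := by
      intro t
      rw [← (hasDerivAt_snd' b hb t y).deriv, hsys1 t y, (hD1 t).deriv]
    -- expansion of a_y = p2 a via hsys2
    have hF2 : HasDerivAt (fun z' => a z' y ^ 2 * b z' y - 2 * ε * b z' y * p1 a z' y
        - 4 * ε ^ 2 * p1 (p1 b) z' y)
        (2 * a z y * p1 a z y * b z y + a z y ^ 2 * p1 b z y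
          - 2 * ε * (p1 b z y * p1 a z y + b z y * p1 (p1 a) z y)
          - 4 * ε ^ 2 * p1 (p1 (p1 b)) z y) z := by
      have := (((hA z).pow 2).mul (hB z)).sub (((hB z).const_mul (2 * ε)).mul (hA1 z))
        |>.sub ((hB2 z).const_mul (4 * ε ^ 2))
      convert this using 1
      all_goals first | rfl | (simp only [Pi.mul_apply, Pi.add_apply, Pi.sub_apply, Pi.pow_apply, Nat.cast_ofNat, Nat.reduceSub, pow_one]; ring)
    have e_p2a : p2 a z y = 1 / 2 * (2 * a z y * p1 a z y * b z y + a z y ^ 2 * p1 b z y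
        - 2 * ε * (p1 b z y * p1 a z y + b z y * p1 (p1 a) z y)
        - 4 * ε ^ 2 * p1 (p1 (p1 b)) z y) := by
      rw [← (hasDerivAt_snd' a ha z y).deriv, hsys2 z y, hF2.deriv]
    -- mixed partial via Clairaut
    have hfun : (fun t => p2 b t y) = (fun t => 1 / 2 * (p1 a t y * (b t y ^ 2 - 1)
        + 2 * a t y * b t y * p1 b t y
        + 2 * ε * (p1 b t y * p1 b t y + b t y * p1 (p1 b) t y))) := funext e_p2b
    have hD1' : HasDerivAt (fun t => 1 / 2 * (p1 a t y * (b t y ^ 2 - 1)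
        + 2 * a t y * b t y * p1 b t y
        + 2 * ε * (p1 b t y * p1 b t y + b t y * p1 (p1 b) t y)))
        (1 / 2 * (p1 (p1 a) z y * (b z y ^ 2 - 1) + 4 * p1 a z y * b z y * p1 b z y
          + 2 * a z y * p1 b z y * p1 b z y + 2 * a z y * b z y * p1 (p1 b) z y
          + 2 * ε * (3 * p1 b z y * p1 (p1 b) z y + b z y * p1 (p1 (p1 b)) z y))) z := by
      have := ((((hA1 z).mul (((hB z).pow 2).sub_const 1)).add
          ((((hA z).const_mul 2).mul (hB z)).mul (hB1 z))).add
            ((((hB1 z).mul (hB1 z)).add ((hB z).mul (hB2 z))).const_mul (2 * ε))).const_mul (1/2)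
      convert this using 1
      all_goals first | rfl | (simp only [Pi.mul_apply, Pi.add_apply, Pi.sub_apply, Pi.pow_apply, Nat.cast_ofNat, Nat.reduceSub, pow_one]; ring)
    have e_mix : p2 (p1 b) z y = 1 / 2 * (p1 (p1 a) z y * (b z y ^ 2 - 1)
        + 4 * p1 a z y * b z y * p1 b z y
        + 2 * a z y * p1 b z y * p1 b z y + 2 * a z y * b z y * p1 (p1 b) z y
        + 2 * ε * (3 * p1 b z y * p1 (p1 b) z y + b z y * p1 (p1 (p1 b)) z y)) := by
      rw [← clairaut_s16 hb z y, ← (hasDerivAt_fst' (p2 b) (contDiff_p2 hb) z y).deriv, hfun,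
        hD1'.deriv]
    -- LHS and RHS derivatives
    have hL : HasDerivAt (fun s => a z s * b z s + 2 * ε * p1 b z s)
        (p2 a z y * b z y + a z y * p2 b z y + 2 * ε * p2 (p1 b) z y) y := by
      have := ((hasDerivAt_snd' a ha z y).mul (hasDerivAt_snd' b hb z y)).add
        ((hasDerivAt_snd' (p1 b) hb1 z y).const_mul (2 * ε))
      convert this using 1
      all_goals first | rfl | (simp only [Pi.mul_apply, Pi.add_apply, Pi.sub_apply, Pi.pow_apply, Nat.cast_ofNat, Nat.reduceSub, pow_one]; ring)
    have hK : HasDerivAt (fun z' => 1 / 4 * (3 * (a z' y * b z' y + 2 * ε * p1 b z' y) ^ 2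
        - a z' y ^ 2) - ε * p1 a z' y)
        (1 / 4 * (6 * (a z y * b z y + 2 * ε * p1 b z y)
            * (p1 a z y * b z y + a z y * p1 b z y + 2 * ε * p1 (p1 b) z y)
          - 2 * a z y * p1 a z y) - ε * p1 (p1 a) z y) z := by
      have := (((((((hA z).mul (hB z)).add ((hB1 z).const_mul (2 * ε))).pow 2).const_mul 3).sub
        ((hA z).pow 2)).const_mul (1/4)).sub ((hA1 z).const_mul ε)
      convert this using 1
      all_goals first | rfl | (simp only [Pi.mul_apply, Pi.add_apply, Pi.sub_apply, Pi.pow_apply, Nat.cast_ofNat, Nat.reduceSub, pow_one]; ring)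
    rw [hL.deriv, hK.deriv, e_p2a, e_p2b z, e_mix]
    ring
end
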